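/- The translation of HOL terms preserves reduction: if M and N are HOL terms and M β-reduces in one step to N, then the translated term |M| reduces to |N| under →βΣ (in one or more steps); consequently M ≡β N implies |M| ≡βΣ |N|. -/
import Mathlib


set_option autoImplicit false

namespace HolDk

/-! ### Dedukti: the λΠ-calculus modulo rewriting, with de Bruijn indices.

Terms `M, N, A, B ::= x | c | Type | Kind | Πx:A.B | λx:A.M | M N`. -/

inductive DTm : Type
  | var   : ℕ → DTm
  | const : ℕ → DTm
  | type  : DTm
  | kind  : DTm
  | pi    : DTm → DTm → DTm
  | lam   : DTm → DTm → DTm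
  | app   : DTm → DTm → DTm
  deriving DecidableEq

namespace DTm

/-- Shift the free de Bruijn indices `≥ c` up by `d`. -/
def shift (d : ℕ) : ℕ → DTm → DTm
  | c, var n => if n < c then var n else var (n + d)
  | _, const k => const k
  | _, type => type
  | _, kind => kind
  | c, pi A B => pi (shift d c A) (shift d (c+1) B)
  | c, lam A M => lam (shift d c A) (shift d (c+1) M)
  | c, app M N => app (shift d c M) (shift d c N)

/-- Lift a simultaneous substitution under one binder. -/
def liftSub (σ : ℕ → DTm) : ℕ → DTm
  | 0 => var 0
  | n+1 => shift 1 0 (σ n)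

/-- Simultaneous substitution. -/
def subst (σ : ℕ → DTm) : DTm → DTm
  | var n => σ n
  | const k => const k
  | type => type
  | kind => kind
  | pi A B => pi (subst σ A) (subst (liftSub σ) B)
  | lam A M => lam (subst σ A) (subst (liftSub σ) M)
  | app M N => app (subst σ M) (subst σ N)

/-- Substitution `[N/x]M` of `N` for the de Bruijn index `0` in `M`. -/
def subst0 (M N : DTm) : DTm :=
  subst (fun n => match n with | 0 => N | n+1 => var n) M

/-- Non-dependent product `A → B`. -/
def arr (A B : DTm) : DTm := pi A (shift 1 0 B)

end DTm

/-- Signatures `Σ ::= · | Σ, c : A | Σ, [Γ] M ⇝ N`. -/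
inductive Sig : Type
  | empty : Sig
  | pushConst : Sig → ℕ → DTm → Sig
  | pushRule : Sig → List DTm → DTm → DTm → Sig

/-- Lookup of the type of a constant in a signature. -/
def Sig.constType : Sig → ℕ → Option DTm
  | .empty, _ => none
  | .pushConst S c A, d => if d = c then some A else S.constType d
  | .pushRule S _ _ _, d => S.constType d

/-- Membership of a rewrite rule `[Γ] M ⇝ N` in a signature. -/
def Sig.hasRule : Sig → List DTm → DTm → DTm → Prop
  | .empty, _, _, _ => False
  | .pushConst S _ _, G, M, N => S.hasRule G M N
  | .pushRule S G' M' N', G, M, N => (G = G' ∧ M = M' ∧ N = N') ∨ S.hasRule G M N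

/-- Pure β-reduction (one step, contextual closure). -/
inductive RedBeta : DTm → DTm → Prop
  | beta (A M N) : RedBeta (.app (.lam A M) N) (M.subst0 N)
  | appL {M M'} (N) : RedBeta M M' → RedBeta (.app M N) (.app M' N)
  | appR (M) {N N'} : RedBeta N N' → RedBeta (.app M N) (.app M N')
  | lamTy {A A'} (M) : RedBeta A A' → RedBeta (.lam A M) (.lam A' M)
  | lamBody (A) {M M'} : RedBeta M M' → RedBeta (.lam A M) (.lam A M')
  | piL {A A'} (B) : RedBeta A A' → RedBeta (.pi A B) (.pi A' B)
  | piR (A) {B B'} : RedBeta B B' → RedBeta (.pi A B) (.pi A B')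

/-- The reduction relation `→βΣ`: β-reduction together with the rewrite rules of
the signature (one step, contextual closure). -/
inductive Red (S : Sig) : DTm → DTm → Prop
  | beta (A M N) : Red S (.app (.lam A M) N) (M.subst0 N)
  | rew {G L R} (σ : ℕ → DTm) : S.hasRule G L R → Red S (L.subst σ) (R.subst σ)
  | appL {M M'} (N) : Red S M M' → Red S (.app M N) (.app M' N)
  | appR (M) {N N'} : Red S N N' → Red S (.app M N) (.app M N')
  | lamTy {A A'} (M) : Red S A A' → Red S (.lam A M) (.lam A' M)
  | lamBody (A) {M M'} : Red S M M' → Red S (.lam A M) (.lam A M')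
  | piL {A A'} (B) : Red S A A' → Red S (.pi A B) (.pi A' B)
  | piR (A) {B B'} : Red S B B' → Red S (.pi A B) (.pi A B')

/-- The conversion `≡βΣ`: reflexive symmetric transitive closure of `→βΣ`. -/
def Conv (S : Sig) : DTm → DTm → Prop := Relation.EqvGen (Red S)

mutual
/-- Signature formation `Σ signature`. -/
inductive SigWf : Sig → Prop
  | empty : SigWf .empty
  | pushConst {S : Sig} {c : ℕ} {A s : DTm} : SigWf S → Typed S [] A s →
      (s = DTm.type ∨ s = DTm.kind) → S.constType c = none →
      SigWf (S.pushConst c A)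
  | pushRule {S : Sig} {G : List DTm} {M N A : DTm} : SigWf S →
      Typed S G M A → Typed S G N A → SigWf (S.pushRule G M N)

/-- Context formation `Σ | Γ context` (contexts are lists, head = most recent binding). -/
inductive CtxWf : Sig → List DTm → Prop
  | nil {S : Sig} : SigWf S → CtxWf S []
  | cons {S : Sig} {G : List DTm} {A : DTm} : CtxWf S G → Typed S G A DTm.type →
      CtxWf S (A :: G)

/-- The typing judgment `Σ | Γ ⊢ M : A` of the λΠ-calculus modulo rewriting. -/
inductive Typed : Sig → List DTm → DTm → DTm → Prop
  | var {S : Sig} {G : List DTm} {n : ℕ} {A : DTm} : CtxWf S G → G[n]? = some A →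
      Typed S G (.var n) (A.shift (n+1) 0)
  | const {S : Sig} {G : List DTm} {c : ℕ} {A : DTm} : CtxWf S G →
      S.constType c = some A → Typed S G (.const c) A
  | type {S : Sig} {G : List DTm} : CtxWf S G → Typed S G .type .kind
  | prod {S : Sig} {G : List DTm} {A B s : DTm} : Typed S G A .type →
      Typed S (A :: G) B s → (s = DTm.type ∨ s = DTm.kind) → Typed S G (.pi A B) s
  | abs {S : Sig} {G : List DTm} {A M B : DTm} : Typed S G A .type →
      Typed S (A :: G) M B → Typed S G (.lam A M) (.pi A B)
  | app {S : Sig} {G : List DTm} {M N A B : DTm} : Typed S G M (.pi A B) →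
      Typed S G N A → Typed S G (.app M N) (B.subst0 N)
  | conv {S : Sig} {G : List DTm} {M A B : DTm} : Typed S G M A →
      Typed S G B DTm.type → Conv S A B → Typed S G M B
end

/-! ### HOL -/

/-- HOL types: type variables, `bool`, `ind`, and arrow types. -/
inductive HTy : Type
  | tvar : ℕ → HTy
  | bool : HTy
  | ind  : HTy
  | arr  : HTy → HTy → HTy
  deriving DecidableEq

/-- HOL terms (simply typed λ-terms, de Bruijn indices for term variables),
with the polymorphic constants `(=_A)` and `select_A`. -/
inductive HTm : Type
  | var    : ℕ → HTm
  | lam    : HTy → HTm → HTm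
  | app    : HTm → HTm → HTm
  | eq     : HTy → HTm
  | select : HTy → HTm
  deriving DecidableEq

/-- The HOL proposition `M = N` (at type `A`), i.e. `(=_A) M N`. -/
def HTm.heq (A : HTy) (M N : HTm) : HTm := .app (.app (.eq A) M) N

/-- HOL typing: `Δ ⊢ M : A` where `Δ` types the term variables. -/
inductive HTyped : List HTy → HTm → HTy → Prop
  | var {D : List HTy} {n : ℕ} {A : HTy} : D[n]? = some A → HTyped D (.var n) A
  | lam {D : List HTy} {A B : HTy} {M : HTm} : HTyped (A :: D) M B →
      HTyped D (.lam A M) (A.arr B)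
  | app {D : List HTy} {A B : HTy} {M N : HTm} : HTyped D M (A.arr B) →
      HTyped D N A → HTyped D (.app M N) B
  | eq {D : List HTy} {A : HTy} : HTyped D (.eq A) (A.arr (A.arr .bool))
  | select {D : List HTy} {A : HTy} : HTyped D (.select A) ((A.arr .bool).arr A)

namespace HTm

/-- Shift the free term-variable indices `≥ c` up by `d`. -/
def shift (d : ℕ) : ℕ → HTm → HTm
  | c, var n => if n < c then var n else var (n + d)
  | c, lam A M => lam A (shift d (c+1) M)
  | c, app M N => app (shift d c M) (shift d c N)
  | _, eq A => eq A
  | _, select A => select A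

def liftSub (σ : ℕ → HTm) : ℕ → HTm
  | 0 => var 0
  | n+1 => shift 1 0 (σ n)

/-- Simultaneous capture-avoiding substitution of term variables. -/
def substF (σ : ℕ → HTm) : HTm → HTm
  | var n => σ n
  | lam A M => lam A (substF (liftSub σ) M)
  | app M N => app (substF σ M) (substF σ N)
  | eq A => eq A
  | select A => select A

/-- Substitution `[N/x]M` for the de Bruijn index `0`. -/
def subst0 (M N : HTm) : HTm :=
  substF (fun n => match n with | 0 => N | n+1 => var n) M

/-- Simultaneous (parallel) substitution `M[M₁/x₁, …, Mₙ/xₙ]` given by a list. -/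
def substL (σ : List HTm) (M : HTm) : HTm :=
  substF (fun n => (σ[n]?).getD (var n)) M

end HTm

/-- Type substitution `A[A₁/α₁, …, Aₘ/αₘ]` on HOL types. -/
def HTy.tsub (θ : List HTy) : HTy → HTy
  | .tvar n => (θ[n]?).getD (.tvar n)
  | .bool => .bool
  | .ind => .ind
  | .arr A B => .arr (A.tsub θ) (B.tsub θ)

/-- Type substitution on HOL terms. -/
def HTm.tsub (θ : List HTy) : HTm → HTm
  | .var n => .var n
  | .lam A M => .lam (A.tsub θ) (M.tsub θ)
  | .app M N => .app (M.tsub θ) (N.tsub θ)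
  | .eq A => .eq (A.tsub θ)
  | .select A => .select (A.tsub θ)

/-- All free type variables of a HOL type are `< n`. -/
def HTy.tvLt (n : ℕ) : HTy → Prop
  | .tvar j => j < n
  | .bool => True
  | .ind => True
  | .arr A B => A.tvLt n ∧ B.tvLt n

/-- All free type variables of a HOL term are `< n`. -/
def HTm.tvLt (n : ℕ) : HTm → Prop
  | .var _ => True
  | .lam A M => A.tvLt n ∧ M.tvLt n
  | .app M N => M.tvLt n ∧ N.tvLt n
  | .eq A => A.tvLt n
  | .select A => A.tvLt n

/-- One-step β-reduction of HOL terms (contextual closure). -/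
inductive HBeta : HTm → HTm → Prop
  | beta (A : HTy) (M N : HTm) : HBeta (.app (.lam A M) N) (M.subst0 N)
  | appL {M M'} (N) : HBeta M M' → HBeta (.app M N) (.app M' N)
  | appR (M) {N N'} : HBeta N N' → HBeta (.app M N) (.app M N')
  | lamBody (A) {M M'} : HBeta M M' → HBeta (.lam A M) (.lam A M')

/-- HOL derivations `Γ ⊢ φ` (Fig. 2), in an ambient term-variable context `Δ`,
with hypotheses `Γ` a finite set of propositions.  The `Subst` rule is split
into a type-substitution rule and a term-substitution rule. -/
inductive HDeriv : List HTy → Finset HTm → HTm → Type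
  | refl {D : List HTy} (A : HTy) (M : HTm) :
      HTyped D M A → HDeriv D ∅ (HTm.heq A M M)
  | absThm {D : List HTy} {G : Finset HTm} (A B : HTy) (M N : HTm) :
      HDeriv (A :: D) (G.image (HTm.shift 1 0)) (HTm.heq B M N) →
      HDeriv D G (HTm.heq (A.arr B) (.lam A M) (.lam A N))
  | appThm {D : List HTy} {G G' : Finset HTm} (A B : HTy) (F Gt M N : HTm) :
      HDeriv D G (HTm.heq (A.arr B) F Gt) → HDeriv D G' (HTm.heq A M N) →
      HDeriv D (G ∪ G') (HTm.heq B (F.app M) (Gt.app N))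
  | beta {D : List HTy} (A B : HTy) (M : HTm) :
      HTyped (A :: D) M B →
      HDeriv (A :: D) ∅ (HTm.heq B (.app (.lam A (M.shift 1 1)) (.var 0)) M)
  | assume {D : List HTy} (φ : HTm) : HTyped D φ .bool → HDeriv D {φ} φ
  | eqMp {D : List HTy} {G G' : Finset HTm} (φ ψ : HTm) :
      HDeriv D G (HTm.heq .bool φ ψ) → HDeriv D G' φ →
      HDeriv D (G ∪ G') ψ
  | deductAntiSym {D : List HTy} {G G' : Finset HTm} (φ ψ : HTm) :
      HDeriv D G φ → HDeriv D G' ψ →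
      HDeriv D (G.erase ψ ∪ G'.erase φ) (HTm.heq .bool φ ψ)
  | typeSubst {D : List HTy} {G : Finset HTm} {φ : HTm} (θ : List HTy) :
      HDeriv D G φ →
      HDeriv (D.map (HTy.tsub θ)) (G.image (HTm.tsub θ)) (φ.tsub θ)
  | termSubst {D : List HTy} {G : Finset HTm} {φ : HTm} {D' : List HTy} (σ : List HTm) :
      σ.length = D.length →
      (∀ (i : ℕ) (A : HTy), D[i]? = some A → ∃ t, σ[i]? = some t ∧ HTyped D' t A) →
      HDeriv D G φ →
      HDeriv D' (G.image (HTm.substL σ)) (HTm.substL σ φ)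

/-! ### The Dedukti signature Σ for HOL -/

def cTy : DTm := .const 0
def dBool : DTm := .const 1
def dInd : DTm := .const 2
def tArr (a b : DTm) : DTm := .app (.app (.const 3) a) b
def tTerm (a : DTm) : DTm := .app (.const 4) a
def tEq (a x y : DTm) : DTm := .app (.app (.app (.const 5) a) x) y
def tProof (p : DTm) : DTm := .app (.const 7) p
def dRefl : DTm := .const 8
def dFunExt : DTm := .const 9
def dAppThm : DTm := .const 10
def dPropExt : DTm := .const 11
def dEqMp : DTm := .const 12
def dImp : DTm := .const 13
def dForall : DTm := .const 14

def tyArrow : DTm := DTm.arr cTy (DTm.arr cTy cTy)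
def tyTerm : DTm := DTm.arr cTy .type
def tyEq : DTm := .pi cTy (tTerm (tArr (.var 0) (tArr (.var 0) dBool)))
def tySelect : DTm := .pi cTy (tTerm (tArr (tArr (.var 0) dBool) (.var 0)))
def tyProof : DTm := DTm.arr (tTerm dBool) .type
def tyRefl : DTm :=
  .pi cTy (.pi (tTerm (.var 0)) (tProof (tEq (.var 1) (.var 0) (.var 0))))
def tyFunExt : DTm :=
  .pi cTy (.pi cTy (.pi (tTerm (tArr (.var 1) (.var 0))) (.pi (tTerm (tArr (.var 2) (.var 1)))
    (DTm.arr
      (.pi (tTerm (.var 3))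
        (tProof (tEq (.var 3) (.app (.var 2) (.var 0)) (.app (.var 1) (.var 0)))))
      (tProof (tEq (tArr (.var 3) (.var 2)) (.var 1) (.var 0)))))))
def tyAppThm : DTm :=
  .pi cTy (.pi cTy (.pi (tTerm (tArr (.var 1) (.var 0))) (.pi (tTerm (tArr (.var 2) (.var 1)))
    (.pi (tTerm (.var 3)) (.pi (tTerm (.var 4))
      (DTm.arr (tProof (tEq (tArr (.var 5) (.var 4)) (.var 3) (.var 2)))
        (DTm.arr (tProof (tEq (.var 5) (.var 1) (.var 0)))
          (tProof (tEq (.var 4) (.app (.var 3) (.var 1)) (.app (.var 2) (.var 0)))))))))))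
def tyPropExt : DTm :=
  .pi (tTerm dBool) (.pi (tTerm dBool)
    (DTm.arr (DTm.arr (tProof (.var 0)) (tProof (.var 1)))
      (DTm.arr (DTm.arr (tProof (.var 0)) (tProof (.var 1)))
        (tProof (tEq dBool (.var 1) (.var 0))))))
def tyEqMp : DTm :=
  .pi (tTerm dBool) (.pi (tTerm dBool)
    (DTm.arr (tProof (tEq dBool (.var 1) (.var 0)))
      (DTm.arr (tProof (.var 1)) (tProof (.var 0)))))

/-- The rewrite rule `[α : type, β : type] term (arrow α β) ⇝ term α → term β`
(in the context list, the head is the most recent variable `β`). -/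
def arrowRuleCtx : List DTm := [cTy, cTy]
def arrowRuleL : DTm := tTerm (tArr (.var 1) (.var 0))
def arrowRuleR : DTm := DTm.arr (tTerm (.var 1)) (tTerm (.var 0))

def baseSig : Sig :=
  ((((Sig.empty.pushConst 0 .type).pushConst 1 cTy).pushConst 2 cTy).pushConst 3
    tyArrow).pushConst 4 tyTerm

/-- The HOL signature Σ:
`type : Type`, `bool ind : type`, `arrow : type → type → type`, `term : type → Type`,
`eq`, `select`, the rewrite rule `term (arrow α β) ⇝ term α → term β`,
`proof : term bool → Type`, and `Refl`, `FunExt`, `AppThm`, `PropExt`, `EqMp`. -/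
def holSig : Sig :=
  ((((((((baseSig.pushConst 5 tyEq).pushConst 6 tySelect).pushRule arrowRuleCtx
    arrowRuleL arrowRuleR).pushConst 7 tyProof).pushConst 8 tyRefl).pushConst 9
    tyFunExt).pushConst 10 tyAppThm).pushConst 11 tyPropExt).pushConst 12 tyEqMp

/-! ### The translation -/

/-- Translation `|A|` of a HOL type as a Dedukti term; `ρ` gives the Dedukti
de Bruijn index of each HOL type variable. -/
def transTy (ρ : ℕ → ℕ) : HTy → DTm
  | .tvar j => .var (ρ j)
  | .bool => dBool
  | .ind => dInd
  | .arr A B => tArr (transTy ρ A) (transTy ρ B)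

/-- Lift a variable renaming under one binder. -/
def liftVar (ρ : ℕ → ℕ) : ℕ → ℕ
  | 0 => 0
  | n+1 => ρ n + 1

/-- Translation `|M|` of a HOL term as a Dedukti term; `ρT`, `ρt` give the
Dedukti de Bruijn indices of the free HOL type resp. term variables. -/
def transTm (ρT ρt : ℕ → ℕ) : HTm → DTm
  | .var i => .var (ρt i)
  | .lam A M => .lam (tTerm (transTy ρT A)) (transTm (fun j => ρT j + 1) (liftVar ρt) M)
  | .app M N => .app (transTm ρT ρt M) (transTm ρT ρt N)
  | .eq A => .app (.const 5) (transTy ρT A)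
  | .select A => .app (.const 6) (transTy ρT A)

/-- The Dedukti context `x₁ : ‖A₁‖, …, xₖ : ‖Aₖ‖` translating a HOL
term-variable context (to be placed in front of the `n` type variables). -/
def dTermCtx : List HTy → List DTm
  | [] => []
  | A :: D => tTerm (transTy (fun j => D.length + j) A) :: dTermCtx D

/-- The Dedukti context `‖Γ‖ = h₁ : ‖φ₁‖, …` translating HOL hypotheses;
`k` is the number of HOL term variables in scope. -/
def hypCtx (k : ℕ) : List HTm → List DTm
  | [] => []
  | φ :: rest =>
      tProof (transTm (fun j => rest.length + k + j) (fun i => rest.length + i) φ) ::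
        hypCtx k rest

def mkApps (f : DTm) (args : List DTm) : DTm := args.foldl .app f

def mkTyLams : ℕ → DTm → DTm
  | 0, M => M
  | n+1, M => .lam cTy (mkTyLams n M)

/-- `λx₁ : ‖B₁‖. … λxₖ : ‖Bₖ‖. M` (the head of the list is the innermost binder). -/
def bindTerms (ρT : ℕ → ℕ) : List HTy → DTm → DTm
  | [], M => M
  | A :: D, M => bindTerms ρT D (.lam (tTerm (transTy (fun j => ρT j + D.length) A)) M)

/-- Translation `|𝒟|` of a HOL derivation as a Dedukti proof term; `ρT`, `ρt`
give the Dedukti indices of free HOL type/term variables, and `ρh` gives the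
index of the hypothesis variable `h_φ` for each hypothesis `φ`. -/
def transDeriv : {D : List HTy} → {G : Finset HTm} → {φ : HTm} →
    (ρT ρt : ℕ → ℕ) → (ρh : HTm → ℕ) → HDeriv D G φ → DTm
  | _, _, _, ρT, ρt, _, .refl A M _ =>
      .app (.app dRefl (transTy ρT A)) (transTm ρT ρt M)
  | _, _, _, ρT, ρt, ρh, .absThm A B M N d =>
      .app (.app (.app (.app (.app dFunExt (transTy ρT A)) (transTy ρT B))
          (transTm ρT ρt (.lam A M))) (transTm ρT ρt (.lam A N)))
        (.lam (tTerm (transTy ρT A))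
          (transDeriv (fun j => ρT j + 1) (liftVar ρt)
            (fun χ => ρh (HTm.substF (fun i => .var (i - 1)) χ) + 1) d))
  | _, _, _, ρT, ρt, ρh, .appThm A B F Gt M N d1 d2 =>
      mkApps dAppThm [transTy ρT A, transTy ρT B, transTm ρT ρt F, transTm ρT ρt Gt,
        transTm ρT ρt M, transTm ρT ρt N,
        transDeriv ρT ρt ρh d1, transDeriv ρT ρt ρh d2]
  | _, _, _, ρT, ρt, _, .beta _ B M _ =>
      .app (.app dRefl (transTy ρT B)) (transTm ρT ρt M)
  | _, _, _, _, _, ρh, .assume φ _ => .var (ρh φ)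
  | _, _, _, ρT, ρt, ρh, .eqMp φ ψ d1 d2 =>
      mkApps dEqMp [transTm ρT ρt φ, transTm ρT ρt ψ,
        transDeriv ρT ρt ρh d1, transDeriv ρT ρt ρh d2]
  | _, _, _, ρT, ρt, ρh, .deductAntiSym φ ψ d1 d2 =>
      mkApps dPropExt [transTm ρT ρt φ, transTm ρT ρt ψ,
        .lam (tProof (transTm ρT ρt ψ))
          (transDeriv (fun j => ρT j + 1) (fun i => ρt i + 1)
            (fun χ => if χ = ψ then 0 else ρh χ + 1) d1),
        .lam (tProof (transTm ρT ρt φ))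
          (transDeriv (fun j => ρT j + 1) (fun i => ρt i + 1)
            (fun χ => if χ = φ then 0 else ρh χ + 1) d2)]
  | _, _, _, ρT, ρt, ρh, .typeSubst θ d =>
      mkApps
        (mkTyLams θ.length
          (transDeriv (fun j => if j < θ.length then j else ρT j + θ.length)
            (fun i => ρt i + θ.length)
            (fun χ => ρh (HTm.tsub θ χ) + θ.length) d))
        (θ.reverse.map (transTy ρT))
  | _, _, _, ρT, ρt, ρh, @HDeriv.termSubst D₀ _ _ _ σ _ _ d =>
      mkApps
        (bindTerms ρT D₀
          (transDeriv (fun j => ρT j + D₀.length)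
            (fun i => if i < D₀.length then i else ρt (i - D₀.length) + D₀.length)
            (fun χ => ρh (HTm.substL σ χ) + D₀.length) d))
        (σ.reverse.map (transTm ρT ρt))

/-- All free type variables appearing in a HOL derivation are `< n`. -/
def HDeriv.tvLt (n : ℕ) : {D : List HTy} → {G : Finset HTm} → {φ : HTm} →
    HDeriv D G φ → Prop
  | _, _, _, .refl A M _ => A.tvLt n ∧ M.tvLt n
  | _, _, _, .absThm A B M N d =>
      A.tvLt n ∧ B.tvLt n ∧ M.tvLt n ∧ N.tvLt n ∧ HDeriv.tvLt n d
  | _, _, _, .appThm A B F Gt M N d1 d2 =>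
      A.tvLt n ∧ B.tvLt n ∧ F.tvLt n ∧ Gt.tvLt n ∧ M.tvLt n ∧ N.tvLt n ∧
        HDeriv.tvLt n d1 ∧ HDeriv.tvLt n d2
  | _, _, _, .beta A B M _ => A.tvLt n ∧ B.tvLt n ∧ M.tvLt n
  | _, _, _, .assume φ _ => φ.tvLt n
  | _, _, _, .eqMp φ ψ d1 d2 => φ.tvLt n ∧ ψ.tvLt n ∧ HDeriv.tvLt n d1 ∧ HDeriv.tvLt n d2
  | _, _, _, .deductAntiSym φ ψ d1 d2 =>
      φ.tvLt n ∧ ψ.tvLt n ∧ HDeriv.tvLt n d1 ∧ HDeriv.tvLt n d2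
  | _, _, _, .typeSubst θ d => (∀ A ∈ θ, A.tvLt n) ∧ HDeriv.tvLt (max θ.length n) d
  | _, _, _, .termSubst σ _ _ d => (∀ t ∈ σ, t.tvLt n) ∧ HDeriv.tvLt n d

/-! ### Auxiliary lemmas for preservation of reduction -/

lemma transTy_congr {ρ ρ' : ℕ → ℕ} (h : ∀ j, ρ j = ρ' j) (A : HTy) :
    transTy ρ A = transTy ρ' A := by
  have := funext h; subst this; rfl

lemma transTm_congr {ρT ρT' ρt ρt' : ℕ → ℕ} (hT : ∀ j, ρT j = ρT' j)
    (ht : ∀ i, ρt i = ρt' i) (M : HTm) : transTm ρT ρt M = transTm ρT' ρt' M := by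
  have h1 := funext hT; have h2 := funext ht; subst h1; subst h2; rfl

lemma shift_transTy (d : ℕ) (A : HTy) : ∀ (c : ℕ) (ρ : ℕ → ℕ),
    DTm.shift d c (transTy ρ A) =
      transTy (fun j => if ρ j < c then ρ j else ρ j + d) A := by
  induction A with
  | tvar j => intro c ρ; simp only [transTy, DTm.shift]; split <;> simp_all
  | bool => intro c ρ; rfl
  | ind => intro c ρ; rfl
  | arr A B ihA ihB =>
      intro c ρ; simp only [transTy, tArr, DTm.shift, ihA, ihB]

lemma shift_transTm (d : ℕ) (M : HTm) : ∀ (c : ℕ) (ρT ρt : ℕ → ℕ),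
    DTm.shift d c (transTm ρT ρt M) =
      transTm (fun j => if ρT j < c then ρT j else ρT j + d)
              (fun i => if ρt i < c then ρt i else ρt i + d) M := by
  induction M with
  | var i => intro c ρT ρt; simp only [transTm, DTm.shift]; split <;> simp_all
  | lam A M ih =>
      intro c ρT ρt
      simp only [transTm, DTm.shift, tTerm, shift_transTy, ih]
      refine congrArg₂ _ rfl ?_
      apply transTm_congr
      · intro j
        by_cases h : ρT j < c
        · simp [h, Nat.succ_lt_succ h]
        · have h2 : ¬ (ρT j + 1 < c + 1) := by omega
          simp only [h, h2, if_false]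
          omega
      · intro i; cases i with
        | zero => simp [liftVar]
        | succ i =>
            simp only [liftVar]
            by_cases h : ρt i < c
            · simp [h, Nat.succ_lt_succ h]
            · have h2 : ¬ (ρt i + 1 < c + 1) := by omega
              simp only [h, h2, if_false]
              omega
  | app M N ihM ihN => intro c ρT ρt; simp only [transTm, DTm.shift, ihM, ihN]
  | eq A => intro c ρT ρt; simp only [transTm, DTm.shift, shift_transTy]
  | select A => intro c ρT ρt; simp only [transTm, DTm.shift, shift_transTy]

lemma transTm_hshift (d : ℕ) (M : HTm) : ∀ (c : ℕ) (ρT ρt : ℕ → ℕ),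
    transTm ρT ρt (HTm.shift d c M) =
      transTm ρT (fun i => if i < c then ρt i else ρt (i + d)) M := by
  induction M with
  | var i => intro c ρT ρt; simp only [HTm.shift, transTm]; split <;> simp_all [transTm]
  | lam A M ih =>
      intro c ρT ρt
      simp only [HTm.shift, transTm, ih]
      refine congrArg₂ _ rfl ?_
      apply transTm_congr (fun _ => rfl)
      intro i; cases i with
      | zero => simp [liftVar]
      | succ i =>
          simp only [liftVar]
          by_cases h : i < c
          · simp [h, Nat.succ_lt_succ h]
          · have : ¬ (i + 1 < c + 1) := by omega
            simp [h, this, Nat.add_right_comm]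
  | app M N ihM ihN => intro c ρT ρt; simp only [HTm.shift, transTm, ihM, ihN]
  | eq A => intro c ρT ρt; rfl
  | select A => intro c ρT ρt; rfl

lemma subst_transTy (A : HTy) : ∀ (τ : ℕ → DTm) (ρ ρ' : ℕ → ℕ),
    (∀ j, τ (ρ' j) = .var (ρ j)) →
    DTm.subst τ (transTy ρ' A) = transTy ρ A := by
  induction A with
  | tvar j => intro τ ρ ρ' h; simpa [transTy, DTm.subst] using h j
  | bool => intro τ ρ ρ' h; rfl
  | ind => intro τ ρ ρ' h; rfl
  | arr A B ihA ihB =>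
      intro τ ρ ρ' h
      simp only [transTy, tArr, DTm.subst, ihA _ _ _ h, ihB _ _ _ h]

lemma subst_transTm (M : HTm) : ∀ (σ : ℕ → HTm) (τ : ℕ → DTm) (ρT ρt ρT' ρt' : ℕ → ℕ),
    (∀ j, τ (ρT' j) = .var (ρT j)) →
    (∀ i, τ (ρt' i) = transTm ρT ρt (σ i)) →
    DTm.subst τ (transTm ρT' ρt' M) = transTm ρT ρt (HTm.substF σ M) := by
  induction M with
  | var i => intro σ τ ρT ρt ρT' ρt' hT ht; simpa [transTm, DTm.subst, HTm.substF] using ht i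
  | lam A M ih =>
      intro σ τ ρT ρt ρT' ρt' hT ht
      simp only [transTm, DTm.subst, HTm.substF, tTerm]
      refine congrArg₂ _ (congrArg₂ _ rfl (subst_transTy A τ ρT ρT' hT)) ?_
      apply ih
      · intro j
        simp only [DTm.liftSub, hT j, DTm.shift]
        norm_num
      · intro i; cases i with
        | zero => rfl
        | succ i =>
            show DTm.liftSub τ (ρt' i + 1) = _
            simp only [DTm.liftSub, ht i, HTm.liftSub]
            rw [shift_transTm, transTm_hshift]
            apply transTm_congr <;> intro n <;> simp [liftVar]
  | app M N ihM ihN =>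
      intro σ τ ρT ρt ρT' ρt' hT ht
      simp only [transTm, DTm.subst, HTm.substF,
        ihM _ _ _ _ _ _ hT ht, ihN _ _ _ _ _ _ hT ht]
  | eq A =>
      intro σ τ ρT ρt ρT' ρt' hT ht
      simp only [transTm, DTm.subst, HTm.substF, subst_transTy A τ ρT ρT' hT]
  | select A =>
      intro σ τ ρT ρt ρT' ρt' hT ht
      simp only [transTm, DTm.subst, HTm.substF, subst_transTy A τ ρT ρT' hT]

lemma hbeta_red {M N : HTm} (h : HBeta M N) : ∀ (ρT ρt : ℕ → ℕ),
    Red holSig (transTm ρT ρt M) (transTm ρT ρt N) := by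
  induction h with
  | beta A M N =>
      intro ρT ρt
      have key : DTm.subst0 (transTm (fun j => ρT j + 1) (liftVar ρt) M) (transTm ρT ρt N)
          = transTm ρT ρt (M.subst0 N) := by
        apply subst_transTm
        · intro j; rfl
        · intro i; cases i with
          | zero => rfl
          | succ i => rfl
      have h := Red.beta (S := holSig) (tTerm (transTy ρT A))
        (transTm (fun j => ρT j + 1) (liftVar ρt) M) (transTm ρT ρt N)
      rw [key] at h
      exact h
  | appL _ _ ih => intro ρT ρt; exact Red.appL _ (ih ρT ρt)
  | appR _ _ ih => intro ρT ρt; exact Red.appR _ (ih ρT ρt)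
  | lamBody A _ ih =>
      intro ρT ρt
      exact Red.lamBody _ (ih (fun j => ρT j + 1) (liftVar ρt))

/-- The translation of HOL terms preserves reduction: if `M` β-reduces in one
step to `N`, then `|M|` reduces to `|N|` under `→βΣ` in one or more steps;
consequently `M ≡β N` implies `|M| ≡βΣ |N|`.
(`k` is the number of HOL term variables in scope; type variable `j` is
translated to the Dedukti variable `k + j`.) -/
theorem translation_preserves_reduction (k : ℕ) (M N : HTm) :
    (HBeta M N →
      Relation.TransGen (Red holSig)
        (transTm (fun j => k + j) (fun i => i) M)
        (transTm (fun j => k + j) (fun i => i) N)) ∧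
    (Relation.EqvGen HBeta M N →
      Conv holSig
        (transTm (fun j => k + j) (fun i => i) M)
        (transTm (fun j => k + j) (fun i => i) N)) := by
  constructor
  · intro h
    exact Relation.TransGen.single (hbeta_red h _ _)
  · intro h
    induction h with
    | rel a b hab => exact Relation.EqvGen.rel _ _ (hbeta_red hab _ _)
    | refl a => exact Relation.EqvGen.refl _
    | symm a b _ ih => exact Relation.EqvGen.symm _ _ ih
    | trans a b c _ _ ih1 ih2 => exact Relation.EqvGen.trans _ _ _ ih1 ih2

end HolDk
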